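/- arXiv:2602.12800 — 5 statements merged into one kernel-verified Lean document; each statement's English description precedes it below -/
import Mathlib

section
/- Let q be prime and let W be a memoryless symmetric channel with input alphabet 𝒳 = 𝔽_q and finite output alphabet 𝒴. For every R with 0 < R < R_max(W), there exist a constant E > 0, a sequence of integers K_L with (K_L/L)·log q → R as L → ∞, and for every sufficiently large L a generator matrix G_L ∈ 𝔽_q^{K_L × L}, such that the linear block code with codebook {mG_L : m ∈ 𝔽_q^{K_L}} has average (over messages) block erasure probability under zero-undetected-error decoding at most e^{−E·L}. -/
open Finset

-- The `L`-fold memoryless extension of a channel `W` (with `W x y` meaning `W(y|x)`).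
noncomputable def WL {X Y : Type*} (W : X → Y → ℝ) (L : ℕ)
    (x : Fin L → X) (y : Fin L → Y) : ℝ :=
  ∏ i, W (x i) (y i)

-- Conditional erasure probability of message `m` for the codebook `cb` (indexed by
-- messages, possibly with repeated codewords) under zero-undetected-error decoding.
open Classical in
noncomputable def erasureProbMsg {X Y M : Type*} [Fintype Y] [Fintype M]
    (W : X → Y → ℝ) (L : ℕ) (cb : M → Fin L → X) (m : M) : ℝ :=
  ∑ y : Fin L → Y,
    if ∃ m0 : M, 0 < WL W L (cb m0) y ∧ ∀ m' : M, m' ≠ m0 → WL W L (cb m') y = 0 then 0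
    else WL W L (cb m) y

-- `R_max(W) = Σ_y (PW)(y)·log(1/P(𝒳(y)))`, where `P` is the uniform distribution on the
-- input alphabet and `𝒳(y) = {x : W(y|x) > 0}`.
open Classical in
noncomputable def Rmax {X Y : Type*} [Fintype X] [Fintype Y] (W : X → Y → ℝ) : ℝ :=
  ∑ y : Y, ((∑ x : X, W x y) / (Fintype.card X : ℝ)) *
    Real.log ((Fintype.card X : ℝ) / ((Finset.univ.filter fun x : X => 0 < W x y).card : ℝ))

/-!
Random linear coding. For a symmetric channel every message of a linear code has the same
erasure probability, and `R_max(W) = ∑_y W(y|0) log (q / |𝒳(y)|)`. Draw the generator matrix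
`G` uniformly: for `m ≠ 0` the codeword `m G` is uniform on `𝔽_q^L`, so it can produce a fixed
output `y` with probability `β(y) = ∏ᵢ |𝒳(yᵢ)| / q`. The union bound over the `q^K`
messages, capped at `1`, together with `min 1 x ≤ x^s` for `s ∈ [0, 1]`, bounds the average
erasure probability of message `0` by `q^{Ks} (∑_y W(y|0) (|𝒳(y)|/q)^s)^L`, and
`eᵗ ≤ 1 + t + t²` (`t ≤ 0`) bounds the inner sum by `exp (-s R_max + s² log² q)`. For
`K = ⌊R L / log q⌋` and small `s > 0` the bound is at most `exp (-s L (R_max - R - s log² q))`.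
-/

open Filter Topology
open scoped Matrix

theorem Real.exp_le_one_add_add_sq_of_nonpos {t : ℝ} (ht : t ≤ 0) :
    Real.exp t ≤ 1 + t + t ^ 2 := by
  have hquad : 0 ≤ 1 + t + t ^ 2 := by nlinarith [sq_nonneg (t + 1)]
  -- `(1 + t + t²)(1 - t) = 1 - t³ ≥ 1` and `1 - t ≤ exp (-t)`
  have h : 1 ≤ (1 + t + t ^ 2) * Real.exp (-t) :=
    calc (1 : ℝ) ≤ (1 + t + t ^ 2) * (1 - t) := by nlinarith [sq_nonneg t]
      _ ≤ (1 + t + t ^ 2) * Real.exp (-t) := by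
        gcongr; linarith [Real.add_one_le_exp (-t)]
  rwa [Real.exp_neg, ← div_eq_mul_inv, one_le_div (Real.exp_pos t)] at h

theorem Real.rpow_le_one_add_mul_log_add_sq {α s : ℝ} (hα0 : 0 < α) (hα1 : α ≤ 1)
    (hs : 0 ≤ s) :
    α ^ s ≤ 1 + s * Real.log α + (s * Real.log α) ^ 2 := by
  rw [Real.rpow_def_of_pos hα0, mul_comm]
  exact Real.exp_le_one_add_add_sq_of_nonpos
    (mul_nonpos_of_nonneg_of_nonpos hs (Real.log_nonpos hα0.le hα1))

theorem Real.min_one_le_rpow {x s : ℝ} (hx : 0 ≤ x) (hs0 : 0 ≤ s) (hs1 : s ≤ 1) :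
    min 1 x ≤ x ^ s := by
  rcases le_total 1 x with h | h
  · exact (min_le_left _ _).trans (Real.one_le_rpow h hs0)
  · exact (min_le_right _ _).trans (Real.self_le_rpow_of_le_one hx h hs1)

theorem sum_mul_rpow_le_exp {ι : Type*} (s : Finset ι) {p α : ι → ℝ} {C t : ℝ}
    (hp : ∀ i ∈ s, 0 ≤ p i) (hp1 : ∑ i ∈ s, p i = 1)
    (hα : ∀ i ∈ s, p i ≠ 0 → 0 < α i ∧ α i ≤ 1 ∧ -C ≤ Real.log (α i))
    (ht : 0 ≤ t) :
    ∑ i ∈ s, p i * α i ^ t ≤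
      Real.exp (t * ∑ i ∈ s, p i * Real.log (α i) + t ^ 2 * C ^ 2) := by
  have hterm : ∀ i ∈ s, p i * α i ^ t ≤ p i * (1 + t * Real.log (α i) + t ^ 2 * C ^ 2) := by
    intro i hi
    rcases (hp i hi).eq_or_lt with h0 | hpos
    · simp [← h0]
    obtain ⟨hα0, hα1, hαC⟩ := hα i hi hpos.ne'
    have hlog : Real.log (α i) ≤ 0 := Real.log_nonpos hα0.le hα1
    have hsq : (t * Real.log (α i)) ^ 2 ≤ t ^ 2 * C ^ 2 := by
      rw [mul_pow]
      exact mul_le_mul_of_nonneg_left (sq_le_sq' hαC (by linarith)) (sq_nonneg t)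
    gcongr
    linarith [Real.rpow_le_one_add_mul_log_add_sq hα0 hα1 ht]
  calc ∑ i ∈ s, p i * α i ^ t
      ≤ ∑ i ∈ s, p i * (1 + t * Real.log (α i) + t ^ 2 * C ^ 2) := Finset.sum_le_sum hterm
    _ = ∑ i ∈ s, (t * (p i * Real.log (α i)) + t ^ 2 * C ^ 2 * p i + p i) :=
      Finset.sum_congr rfl fun i _ => by ring
    _ = t * ∑ i ∈ s, p i * Real.log (α i) + t ^ 2 * C ^ 2 + 1 := by
      rw [Finset.sum_add_distrib, Finset.sum_add_distrib, ← Finset.mul_sum, ← Finset.mul_sum,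
        hp1, mul_one]
    _ ≤ _ := Real.add_one_le_exp _

theorem tendsto_natFloor_mul_div_mul {R C : ℝ} (hR : 0 ≤ R) (hC : 0 < C) :
    Tendsto (fun L : ℕ => (⌊R * L / C⌋₊ : ℝ) / L * C) atTop (𝓝 R) := by
  have hlower : Tendsto (fun L : ℕ => R - C / L) atTop (𝓝 R) := by
    simpa using tendsto_const_nhds.sub (tendsto_const_div_atTop_nhds_zero_nat C)
  refine tendsto_of_tendsto_of_tendsto_of_le_of_le' hlower tendsto_const_nhds ?_ ?_
  all_goals
    filter_upwards [eventually_gt_atTop 0] with L hL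
    have hL : (0 : ℝ) < L := by exact_mod_cast hL
    rw [div_mul_eq_mul_div]
  · rw [sub_le_iff_le_add, ← add_div, le_div_iff₀ hL]
    have := Nat.lt_floor_add_one (R * L / C)
    rw [div_lt_iff₀ hC] at this
    linarith
  · rw [div_le_iff₀ hL, ← le_div_iff₀ hC]
    exact Nat.floor_le (by positivity)

theorem AddMonoidHom.card_smul_sum_comp_of_surjective {A B M : Type*} [AddCommGroup A] [Fintype A]
    [AddCommGroup B] [Fintype B] [AddCommMonoid M] (φ : A →+ B) (hφ : Function.Surjective φ)
    (f : B → M) : Fintype.card B • ∑ a, f (φ a) = Fintype.card A • ∑ b, f b := by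
  classical
  have hfiber : ∀ b, #{a | φ a = b} = #{a | φ a = 0} := fun b =>
    AddMonoidHom.card_fiber_eq_of_mem_range φ (hφ b) (hφ 0)
  have hsum : ∑ a, f (φ a) = #{a | φ a = 0} • ∑ b, f b := by
    rw [← Finset.sum_fiberwise univ φ, Finset.smul_sum]
    refine Finset.sum_congr rfl fun b _ => ?_
    rw [Finset.sum_congr rfl fun a ha => by rw [(Finset.mem_filter.1 ha).2], Finset.sum_const,
      hfiber]
  have hcard : Fintype.card A = Fintype.card B * #{a | φ a = 0} := by
    rw [← Finset.card_univ, Finset.card_eq_sum_card_fiberwise (f := φ) (t := univ)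
      (fun _ _ => Finset.mem_coe.2 (Finset.mem_univ _))]
    simp [hfiber]
  rw [hsum, hcard, smul_smul, mul_smul]

theorem Matrix.vecMul_surjective_of_ne_zero {m n K : Type*} [Fintype m] [DecidableEq m]
    [DivisionRing K] {v : m → K} (hv : v ≠ 0) :
    Function.Surjective fun M : Matrix m n K => v ᵥ* M := by
  obtain ⟨k, hk⟩ := Function.ne_iff.1 hv
  intro c
  refine ⟨Matrix.of fun i j => if i = k then (v k)⁻¹ * c j else 0, ?_⟩
  ext j
  simp [Matrix.vecMul, dotProduct, ← mul_assoc, mul_inv_cancel₀ hk]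

section Channel

variable {X Y : Type*} (W : X → Y → ℝ)

noncomputable def inputSupport [Fintype X] (y : Y) : Finset X := {x | 0 < W x y}

theorem WL_nonneg (hW0 : ∀ x y, 0 ≤ W x y) {L : ℕ} (x : Fin L → X) (y : Fin L → Y) :
    0 ≤ WL W L x y :=
  Finset.prod_nonneg fun _ _ => hW0 _ _

theorem WL_pos_iff (hW0 : ∀ x y, 0 ≤ W x y) {L : ℕ} (x : Fin L → X) (y : Fin L → Y) :
    0 < WL W L x y ↔ ∀ i, 0 < W (x i) (y i) := by
  rw [(WL_nonneg W hW0 x y).lt_iff_ne', WL, ne_eq, Finset.prod_eq_zero_iff]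
  simp [(hW0 _ _).lt_iff_ne']

theorem card_WL_pos [Fintype X] [DecidableEq X] (hW0 : ∀ x y, 0 ≤ W x y) {L : ℕ}
    (y : Fin L → Y) : #{x | 0 < WL W L x y} = ∏ i, #(inputSupport W (y i)) := by
  rw [← Fintype.card_piFinset]
  congr 1
  ext x
  simp [WL_pos_iff W hW0, inputSupport]

theorem sum_WL_mul_prod [Fintype Y] {L : ℕ} (x : Fin L → X) (g : Y → ℝ) :
    ∑ y, WL W L x y * ∏ i, g (y i) = ∏ i, ∑ y, W (x i) y * g y := by
  rw [Fintype.prod_sum]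
  simp [WL, Finset.prod_mul_distrib]

theorem erasureProbMsg_le_sum_min [Fintype Y] {M : Type*} [Fintype M] [DecidableEq M]
    (hW0 : ∀ x y, 0 ≤ W x y) {L : ℕ} (cb : M → Fin L → X) (m : M) :
    erasureProbMsg W L cb m ≤
      ∑ y, WL W L (cb m) y * min 1 (#{m' | m' ≠ m ∧ 0 < WL W L (cb m') y} : ℝ) := by
  refine Finset.sum_le_sum fun y _ => ?_
  have hmin : (0 : ℝ) ≤ min 1 (#{m' | m' ≠ m ∧ 0 < WL W L (cb m') y} : ℝ) := by positivity
  split_ifs with hdec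
  · exact mul_nonneg (WL_nonneg W hW0 _ _) hmin
  rcases (WL_nonneg W hW0 (cb m) y).eq_or_lt with h0 | hpos
  · rw [← h0, zero_mul]
  obtain ⟨m', hm', hpos'⟩ : ∃ m', m' ≠ m ∧ 0 < WL W L (cb m') y := by
    by_contra! hnone
    exact hdec ⟨m, hpos, fun m' hm' => (hnone m' hm').antisymm (WL_nonneg W hW0 _ _)⟩
  have hcard : 1 ≤ #{m' | m' ≠ m ∧ 0 < WL W L (cb m') y} :=
    Finset.card_pos.2 ⟨m', by simp [hm', hpos']⟩
  rw [min_eq_left (by exact_mod_cast hcard), mul_one]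

end Channel

section Symmetric

variable {X Y : Type*} [AddCommGroup X] (W : X → Y → ℝ) (T : Y → X → Y)

theorem inputSupport_T [Fintype X] (hTsym : ∀ x₁ x₂ y, W x₁ y = W x₂ (T y (x₂ - x₁)))
    (y : Y) (x : X) :
    inputSupport W (T y x) = (inputSupport W y).map (Equiv.addRight x).toEmbedding := by
  ext b
  simp [inputSupport, Finset.mem_map_equiv, hTsym (b + -x) b y]

theorem sum_mul_eq_sum_zero_mul [Fintype Y] (hTbij : ∀ x, Function.Bijective fun y => T y x)
    (hTsym : ∀ x₁ x₂ y, W x₁ y = W x₂ (T y (x₂ - x₁)))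
    (φ : Y → ℝ) (hφ : ∀ y x, φ (T y x) = φ y) (x : X) :
    ∑ y, W x y * φ y = ∑ y, W 0 y * φ y := by
  rw [← (Equiv.ofBijective _ (hTbij x)).sum_comp]
  simp [hφ, hTsym 0 x]

theorem Rmax_eq_sum_zero [Fintype X] [Fintype Y]
    (hTbij : ∀ x, Function.Bijective fun y => T y x)
    (hTsym : ∀ x₁ x₂ y, W x₁ y = W x₂ (T y (x₂ - x₁))) :
    Rmax W = ∑ y, W 0 y * Real.log (Fintype.card X / #(inputSupport W y)) := by
  have hrow := sum_mul_eq_sum_zero_mul W T hTbij hTsym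
    (fun y => Real.log (Fintype.card X / #(inputSupport W y)))
    (fun y x => by rw [inputSupport_T W T hTsym, Finset.card_map])
  have hX : (Fintype.card X : ℝ) ≠ 0 := Nat.cast_ne_zero.2 Fintype.card_ne_zero
  calc Rmax W
      = (Fintype.card X : ℝ)⁻¹ *
          ∑ x, ∑ y, W x y * Real.log (Fintype.card X / #(inputSupport W y)) := by
        simp only [Rmax, inputSupport, div_eq_inv_mul, Finset.mul_sum, Finset.sum_mul]
        rw [Finset.sum_comm]
        exact Finset.sum_congr rfl fun _ _ => Finset.sum_congr rfl fun _ _ => by ring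
    _ = _ := by simp [hrow, hX]

theorem erasureProbMsg_addMonoidHom_eq [Fintype Y]
    (hTbij : ∀ x, Function.Bijective fun y => T y x)
    (hTsym : ∀ x₁ x₂ y, W x₁ y = W x₂ (T y (x₂ - x₁)))
    {M : Type*} [AddCommGroup M] [Fintype M] {L : ℕ} (cb : M →+ (Fin L → X)) (m : M) :
    erasureProbMsg W L cb m = erasureProbMsg W L cb 0 := by
  classical
  -- translating outputs by the codeword of `m` turns it into the zero codeword
  let e : (Fin L → Y) ≃ (Fin L → Y) :=
    Equiv.piCongrRight fun i => Equiv.ofBijective _ (hTbij (cb m i))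
  have hshift : ∀ m' y, WL W L (cb m') (e y) = WL W L (cb (m' - m)) y := fun m' y =>
    Finset.prod_congr rfl fun i _ => by
      simp [e, hTsym (cb m' i - cb m i) (cb m' i) (y i)]
  have hdec : ∀ y,
      (∃ m0, 0 < WL W L (cb m0) (e y) ∧ ∀ m', m' ≠ m0 → WL W L (cb m') (e y) = 0) ↔
        ∃ m0, 0 < WL W L (cb m0) y ∧ ∀ m', m' ≠ m0 → WL W L (cb m') y = 0 := fun y => by
    simp only [hshift]
    refine (Equiv.subRight m).exists_congr fun m0 => and_congr_right fun _ =>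
      (Equiv.subRight m).forall_congr fun m' => ?_
    simp
  unfold erasureProbMsg
  rw [← e.sum_comp]
  exact Finset.sum_congr rfl fun y _ => if_congr (hdec y) rfl (by rw [hshift, sub_self])

theorem sum_mul_rpow_card_inputSupport_le [Fintype X] [Fintype Y] (hW0 : ∀ x y, 0 ≤ W x y)
    (hW1 : ∀ x, ∑ y, W x y = 1) (hTbij : ∀ x, Function.Bijective fun y => T y x)
    (hTsym : ∀ x₁ x₂ y, W x₁ y = W x₂ (T y (x₂ - x₁))) {s : ℝ} (hs : 0 ≤ s) :
    ∑ y, W 0 y * ((#(inputSupport W y) : ℝ) / Fintype.card X) ^ s ≤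
      Real.exp (-s * Rmax W + s ^ 2 * Real.log (Fintype.card X) ^ 2) := by
  have hlog : ∀ y, Real.log ((#(inputSupport W y) : ℝ) / Fintype.card X) =
      -Real.log (Fintype.card X / #(inputSupport W y)) := fun y => by
    rw [← Real.log_inv, inv_div]
  have hX : (0 : ℝ) < Fintype.card X := Nat.cast_pos.2 Fintype.card_pos
  have hα : ∀ y ∈ univ, W 0 y ≠ 0 → 0 < (#(inputSupport W y) : ℝ) / Fintype.card X ∧
      (#(inputSupport W y) : ℝ) / Fintype.card X ≤ 1 ∧
      -Real.log (Fintype.card X) ≤ Real.log ((#(inputSupport W y) : ℝ) / Fintype.card X) := by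
    intro y _ hy
    have hN : (1 : ℝ) ≤ #(inputSupport W y) := by
      exact_mod_cast Finset.card_pos.2
        ⟨0, by simpa [inputSupport] using (hW0 0 y).lt_of_ne' hy⟩
    refine ⟨by positivity,
      div_le_one_of_le₀ (by exact_mod_cast Finset.card_le_univ _) hX.le, ?_⟩
    rw [Real.log_div (by positivity) hX.ne']
    linarith [Real.log_nonneg hN]
  simpa [hlog, Rmax_eq_sum_zero W T hTbij hTsym, Finset.sum_neg_distrib] using
    sum_mul_rpow_le_exp univ (fun y _ => hW0 0 y) (hW1 0) hα hs

end Symmetric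

section RandomLinearCode

variable {F Y : Type*} [Field F] [Fintype F] [DecidableEq F] (W : F → Y → ℝ)

theorem card_pow_mul_card_vecMul_WL_pos (hW0 : ∀ x y, 0 ≤ W x y) {K L : ℕ} {m : Fin K → F}
    (hm : m ≠ 0) (y : Fin L → Y) :
    Fintype.card F ^ L * #{G : Matrix (Fin K) (Fin L) F | 0 < WL W L (m ᵥ* G) y} =
      Fintype.card (Matrix (Fin K) (Fin L) F) * ∏ i, #(inputSupport W (y i)) := by
  let φ : Matrix (Fin K) (Fin L) F →+ (Fin L → F) :=
    AddMonoidHom.mk' (fun G => m ᵥ* G) fun G G' => Matrix.vecMul_add G G' m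
  have h := φ.card_smul_sum_comp_of_surjective (Matrix.vecMul_surjective_of_ne_zero hm)
    fun c => if 0 < WL W L c y then 1 else 0
  simp only [smul_eq_mul, Finset.sum_boole, Nat.cast_id, Fintype.card_fun, Fintype.card_fin,
    card_WL_pos W hW0] at h
  exact h

theorem sum_card_ne_zero_vecMul_WL_pos_le [Fintype Y] (hW0 : ∀ x y, 0 ≤ W x y) {K L : ℕ}
    (y : Fin L → Y) :
    ∑ G : Matrix (Fin K) (Fin L) F, (#{m | m ≠ 0 ∧ 0 < WL W L (m ᵥ* G) y} : ℝ) ≤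
      Fintype.card (Matrix (Fin K) (Fin L) F) *
        ((Fintype.card F : ℝ) ^ K * ∏ i, (#(inputSupport W (y i)) : ℝ) / Fintype.card F) := by
  have hq : (0 : ℝ) < Fintype.card F := Nat.cast_pos.2 Fintype.card_pos
  have hG : ∀ m : Fin K → F, m ≠ 0 →
      (#{G : Matrix (Fin K) (Fin L) F | 0 < WL W L (m ᵥ* G) y} : ℝ) =
        Fintype.card (Matrix (Fin K) (Fin L) F) * ∏ i, (#(inputSupport W (y i)) : ℝ) /
          Fintype.card F := fun m hm => by
    have h := congrArg (Nat.cast : ℕ → ℝ) (card_pow_mul_card_vecMul_WL_pos W hW0 hm y)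
    push_cast at h
    rw [Finset.prod_div_distrib, Finset.prod_const, Finset.card_univ, Fintype.card_fin,
      mul_div_assoc', eq_div_iff (by positivity), ← h, mul_comm]
  calc ∑ G : Matrix (Fin K) (Fin L) F, (#{m | m ≠ 0 ∧ 0 < WL W L (m ᵥ* G) y} : ℝ)
      = ∑ m ∈ {m : Fin K → F | m ≠ 0},
          (#{G : Matrix (Fin K) (Fin L) F | 0 < WL W L (m ᵥ* G) y} : ℝ) := by
        simp only [Finset.card_filter, Nat.cast_sum, Finset.sum_filter]
        rw [Finset.sum_comm]
        simp [ite_and]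
    _ ≤ ∑ _m : Fin K → F, Fintype.card (Matrix (Fin K) (Fin L) F) *
          ∏ i, (#(inputSupport W (y i)) : ℝ) / Fintype.card F := by
        rw [Finset.sum_congr rfl fun m hm => hG m (Finset.mem_filter.1 hm).2]
        exact Finset.sum_le_sum_of_subset_of_nonneg (Finset.filter_subset _ _)
          fun _ _ _ => by positivity
    _ = _ := by simp; ring

theorem sum_min_one_card_ne_zero_vecMul_WL_pos_le [Fintype Y] (hW0 : ∀ x y, 0 ≤ W x y)
    {K L : ℕ} (y : Fin L → Y) {s : ℝ} (hs0 : 0 ≤ s) (hs1 : s ≤ 1) :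
    ∑ G : Matrix (Fin K) (Fin L) F, min 1 (#{m | m ≠ 0 ∧ 0 < WL W L (m ᵥ* G) y} : ℝ) ≤
      Fintype.card (Matrix (Fin K) (Fin L) F) * ((Fintype.card F : ℝ) ^ K *
        ∏ i, (#(inputSupport W (y i)) : ℝ) / Fintype.card F) ^ s := by
  set N : ℝ := (Fintype.card (Matrix (Fin K) (Fin L) F) : ℝ)
  set x := (Fintype.card F : ℝ) ^ K * ∏ i, (#(inputSupport W (y i)) : ℝ) / Fintype.card F
  calc _ ≤ min N (N * x) := le_min
        ((Finset.sum_le_sum fun _ _ => min_le_left _ _).trans (by simp [N]))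
        ((Finset.sum_le_sum fun _ _ => min_le_right _ _).trans
          (sum_card_ne_zero_vecMul_WL_pos_le W hW0 y))
    _ = N * min 1 x := by rw [mul_min_of_nonneg _ _ (by positivity), mul_one]
    _ ≤ N * x ^ s := by gcongr; exact Real.min_one_le_rpow (by positivity) hs0 hs1

theorem exists_generator_erasureProbMsg_zero_le [Fintype Y] (hW0 : ∀ x y, 0 ≤ W x y)
    (K L : ℕ) {s : ℝ} (hs0 : 0 ≤ s) (hs1 : s ≤ 1) :
    ∃ G : Matrix (Fin K) (Fin L) F, erasureProbMsg W L (fun m => m ᵥ* G) 0 ≤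
      ((Fintype.card F : ℝ) ^ K) ^ s *
        (∑ y, W 0 y * ((#(inputSupport W y) : ℝ) / Fintype.card F) ^ s) ^ L := by
  set N : ℝ := (Fintype.card (Matrix (Fin K) (Fin L) F) : ℝ)
  set q : ℝ := (Fintype.card F : ℝ)
  have hq : 0 < q := Nat.cast_pos.2 Fintype.card_pos
  set β : (Fin L → Y) → ℝ := fun y => ∏ i, (#(inputSupport W (y i)) : ℝ) / q
  have hsum : ∑ G : Matrix (Fin K) (Fin L) F, erasureProbMsg W L (fun m => m ᵥ* G) 0 ≤
      ∑ _G : Matrix (Fin K) (Fin L) F, (q ^ K) ^ s *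
        (∑ y, W 0 y * ((#(inputSupport W y) : ℝ) / q) ^ s) ^ L :=
    calc _ ≤ ∑ G : Matrix (Fin K) (Fin L) F, ∑ y, WL W L 0 y *
          min 1 (#{m | m ≠ 0 ∧ 0 < WL W L (m ᵥ* G) y} : ℝ) :=
          Finset.sum_le_sum fun G _ => by
            simpa using erasureProbMsg_le_sum_min W hW0 (fun m => m ᵥ* G) 0
      _ ≤ ∑ y, WL W L 0 y * (N * (q ^ K * β y) ^ s) := by
        rw [Finset.sum_comm]
        gcongr with y
        rw [← Finset.mul_sum]
        exact mul_le_mul_of_nonneg_left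
          (sum_min_one_card_ne_zero_vecMul_WL_pos_le W hW0 y hs0 hs1) (WL_nonneg W hW0 _ _)
      _ = N * ((q ^ K) ^ s *
            ∑ y, WL W L 0 y * ∏ i, ((#(inputSupport W (y i)) : ℝ) / q) ^ s) := by
        simp only [Finset.mul_sum]
        refine Finset.sum_congr rfl fun y _ => ?_
        rw [Real.mul_rpow (by positivity) (by positivity),
          Real.finsetProd_rpow _ _ (fun _ _ => by positivity)]
        ring
      _ = _ := by
        rw [sum_WL_mul_prod W 0 fun y => ((#(inputSupport W y) : ℝ) / q) ^ s]
        simp [N]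
  obtain ⟨G, -, hG⟩ := Finset.exists_le_of_sum_le Finset.univ_nonempty hsum
  exact ⟨G, hG⟩

theorem exists_generator_average_erasureProbMsg_le [Fintype Y] (T : Y → F → Y)
    (hW0 : ∀ x y, 0 ≤ W x y) (hW1 : ∀ x, ∑ y, W x y = 1)
    (hTbij : ∀ x, Function.Bijective fun y => T y x)
    (hTsym : ∀ x₁ x₂ y, W x₁ y = W x₂ (T y (x₂ - x₁))) (K L : ℕ) {s : ℝ}
    (hs0 : 0 ≤ s) (hs1 : s ≤ 1) :
    ∃ G : Matrix (Fin K) (Fin L) F,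
      (1 / (Fintype.card F : ℝ) ^ K) *
          ∑ m : Fin K → F, erasureProbMsg W L (fun m' => m' ᵥ* G) m ≤
        Real.exp (s * K * Real.log (Fintype.card F) -
          L * (s * Rmax W - s ^ 2 * Real.log (Fintype.card F) ^ 2)) := by
  have hq : (0 : ℝ) < Fintype.card F := Nat.cast_pos.2 Fintype.card_pos
  obtain ⟨G, hG⟩ := exists_generator_erasureProbMsg_zero_le W hW0 K L hs0 hs1
  have hrow := sum_mul_rpow_card_inputSupport_le W T hW0 hW1 hTbij hTsym hs0
  have hf : 0 ≤ ∑ y, W 0 y * ((#(inputSupport W y) : ℝ) / Fintype.card F) ^ s :=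
    Finset.sum_nonneg fun y _ => mul_nonneg (hW0 0 y) (by positivity)
  have hmsg : ∀ m, erasureProbMsg W L (fun m' => m' ᵥ* G) m =
      erasureProbMsg W L (fun m' => m' ᵥ* G) 0 :=
    erasureProbMsg_addMonoidHom_eq W T hTbij hTsym (Matrix.vecMulLinear G).toAddMonoidHom
  refine ⟨G, ?_⟩
  rw [Finset.sum_congr rfl fun m _ => hmsg m, Finset.sum_const, Finset.card_univ,
    Fintype.card_fun, Fintype.card_fin, nsmul_eq_mul, Nat.cast_pow, one_div,
    inv_mul_cancel_left₀ (by positivity)]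
  calc _ ≤ _ := hG
    _ = Real.exp (s * K * Real.log (Fintype.card F)) *
        (∑ y, W 0 y * ((#(inputSupport W y) : ℝ) / Fintype.card F) ^ s) ^ L := by
      congr 1
      rw [← Real.rpow_natCast, ← Real.rpow_mul hq.le, Real.rpow_def_of_pos hq]
      ring_nf
    _ ≤ Real.exp (s * K * Real.log (Fintype.card F)) *
        Real.exp (-s * Rmax W + s ^ 2 * Real.log (Fintype.card F) ^ 2) ^ L := by
      gcongr
    _ = _ := by
      rw [← Real.exp_nat_mul, ← Real.exp_add]
      ring_nf

end RandomLinearCode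

/-- For any rate `0 < R < R_max(W)` there exist `E > 0`, a sequence of dimensions `K_L` with
`(K_L/L)·log q → R`, and for every sufficiently large `L` a generator matrix `G_L` whose
linear block code has average (over messages) block erasure probability under
zero-undetected-error decoding at most `e^{−E·L}`. -/
theorem exists_linear_codes_exponential_erasure
    (q : ℕ) [Fact q.Prime]
    {Y : Type*} [Fintype Y]
    (W : ZMod q → Y → ℝ)
    (hW0 : ∀ x y, 0 ≤ W x y) (hW1 : ∀ x, ∑ y, W x y = 1)
    (T : Y → ZMod q → Y)
    (hTbij : ∀ x, Function.Bijective fun y => T y x)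
    (hTsym : ∀ x₁ x₂ y, W x₁ y = W x₂ (T y (x₂ - x₁)))
    (R : ℝ) (hR0 : 0 < R) (hRmax : R < Rmax W) :
    ∃ E : ℝ, 0 < E ∧ ∃ K : ℕ → ℕ,
      Filter.Tendsto (fun L : ℕ => (K L : ℝ) / (L : ℝ) * Real.log q)
        Filter.atTop (nhds R) ∧
      ∀ᶠ L : ℕ in Filter.atTop, ∃ G : Matrix (Fin (K L)) (Fin L) (ZMod q),
        (1 / (q : ℝ) ^ (K L)) * ∑ m : Fin (K L) → ZMod q,
          erasureProbMsg W L (fun m' => Matrix.vecMul m' G) m ≤ Real.exp (-E * L) := by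
  have hC : 0 < Real.log q := Real.log_pos (by exact_mod_cast (Fact.out : q.Prime).one_lt)
  set δ := (Rmax W - R) / 2 with hδ_def
  have hδ : 0 < δ := by linarith
  set s := min 1 (δ / Real.log q ^ 2)
  have hs : 0 < s := lt_min one_pos (by positivity)
  have hsC : s * Real.log q ^ 2 ≤ δ := (le_div_iff₀ (by positivity)).1 (min_le_right _ _)
  refine ⟨s * δ, by positivity, fun L => ⌊R * L / Real.log q⌋₊,
    tendsto_natFloor_mul_div_mul hR0.le hC, Eventually.of_forall fun L => ?_⟩
  obtain ⟨G, hG⟩ := exists_generator_average_erasureProbMsg_le W T hW0 hW1 hTbij hTsym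
    ⌊R * L / Real.log q⌋₊ L hs.le (min_le_left _ _)
  rw [ZMod.card] at hG
  have hK : (⌊R * L / Real.log q⌋₊ : ℝ) * Real.log q ≤ R * L :=
    (le_div_iff₀ hC).1 (Nat.floor_le (by positivity))
  have hRmax' : Rmax W = R + 2 * δ := by rw [hδ_def]; ring
  refine ⟨G, hG.trans (Real.exp_le_exp.2 ?_)⟩
  -- the exponent is `-s L (R_max - R - s log² q)` and `s log² q ≤ δ`
  rw [hRmax']
  nlinarith [mul_le_mul_of_nonneg_left hK hs.le,
    mul_le_mul_of_nonneg_left hsC (mul_nonneg hs.le L.cast_nonneg)]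
end

section
/- Let 𝒳 be a finite abelian group, 𝒴 a finite set, and W a memoryless symmetric channel from 𝒳 to 𝒴. Then for every ρ > 0, every L ≥ 1, and every x ∈ 𝒳^L, Σ_{y ∈ 𝒴^L} W^(L)(y|x) · ( |𝒳^L(y)| / |𝒳|^L )^ρ = ( Σ_{y ∈ 𝒴} (PW)(y) · (|𝒳(y)|/|𝒳|)^ρ )^L, where 𝒳^L(y) = {x' ∈ 𝒳^L : W^(L)(y|x') > 0}. In particular, the left-hand side does not depend on x. -/
open Finset

-- For a memoryless symmetric channel, for every `ρ > 0`, `L ≥ 1` and input word `x`,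
-- `Σ_{y∈𝒴^L} W^(L)(y|x)·(|𝒳^L(y)|/|𝒳|^L)^ρ = (Σ_{y∈𝒴} (PW)(y)·(|𝒳(y)|/|𝒳|)^ρ)^L`,
-- where `𝒳^L(y) = {x' : W^(L)(y|x') > 0}`; in particular the left-hand side does not
-- depend on `x`.
open Classical in
theorem symmetric_channel_product_identity
    {X Y : Type*} [Fintype X] [Fintype Y] [AddCommGroup X]
    (W : X → Y → ℝ)
    (hW0 : ∀ x y, 0 ≤ W x y) (hW1 : ∀ x, ∑ y, W x y = 1)
    (T : Y → X → Y)
    (hTbij : ∀ x, Function.Bijective fun y => T y x)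
    (hTsym : ∀ x₁ x₂ y, W x₁ y = W x₂ (T y (x₂ - x₁)))
    (ρ : ℝ) (hρ : 0 < ρ) (L : ℕ) (hL : 1 ≤ L) (x : Fin L → X) :
    ∑ y : Fin L → Y, WL W L x y *
        ((((Finset.univ.filter fun x' : Fin L → X => 0 < WL W L x' y).card : ℝ) /
            (Fintype.card X : ℝ) ^ L) ^ ρ)
      = (∑ y : Y, ((∑ x0 : X, W x0 y) / (Fintype.card X : ℝ)) *
          ((((Finset.univ.filter fun x0 : X => 0 < W x0 y).card : ℝ) /
              (Fintype.card X : ℝ)) ^ ρ)) ^ L := by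
  set c : Y → ℝ := fun y => ((Finset.univ.filter fun x0 : X => 0 < W x0 y).card : ℝ) with hc
  set g : Y → ℝ := fun y => (c y / (Fintype.card X : ℝ)) ^ ρ with hg
  have hcardX : (0 : ℝ) < (Fintype.card X : ℝ) := by
    exact_mod_cast Fintype.card_pos
  -- the cardinality of the product filter factors
  have hcard : ∀ y : Fin L → Y,
      ((Finset.univ.filter fun x' : Fin L → X => 0 < WL W L x' y).card : ℝ)
        = ∏ i, c (y i) := by
    intro y
    have hiff : ∀ x' : Fin L → X, (0 < WL W L x' y) ↔ ∀ i, 0 < W (x' i) (y i) := by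
      intro x'
      constructor
      · intro h i
        rcases lt_or_eq_of_le (hW0 (x' i) (y i)) with h' | h'
        · exact h'
        · exfalso
          have : WL W L x' y = 0 := by
            apply Finset.prod_eq_zero (Finset.mem_univ i)
            exact h'.symm
          simp [this] at h
      · intro h
        exact Finset.prod_pos fun i _ => h i
    have : (Finset.univ.filter fun x' : Fin L → X => 0 < WL W L x' y)
        = (Finset.univ.filter fun x' : Fin L → X => ∀ i, 0 < W (x' i) (y i)) := by
      apply Finset.filter_congr
      intro x' _
      simp [hiff x']
    rw [this]
    have h2 : (Finset.univ.filter fun x' : Fin L → X => ∀ i, 0 < W (x' i) (y i))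
        = Fintype.piFinset (fun i => Finset.univ.filter fun x0 : X => 0 < W x0 (y i)) := by
      ext x'
      simp [Fintype.mem_piFinset]
    rw [h2, Fintype.card_piFinset]
    push_cast
    rfl
  -- the single-letter sum is independent of the input letter
  have hgT : ∀ (d : X) (y : Y), g (T y d) = g y := by
    intro d y
    have : c (T y d) = c y := by
      simp only [hc]
      congr 1
      apply Finset.card_bij (fun a _ => a - d)
      · intro a ha
        simp only [Finset.mem_filter, Finset.mem_univ, true_and] at ha ⊢
        have h := hTsym (a - d) a y
        simp only [sub_sub_cancel] at h
        rwa [h]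
      · intro a _ b _ hab
        simpa using hab
      · intro b hb
        simp only [Finset.mem_filter, Finset.mem_univ, true_and] at hb
        refine ⟨b + d, ?_, by abel⟩
        simp only [Finset.mem_filter, Finset.mem_univ, true_and]
        have h := hTsym b (b + d) y
        simp only [add_sub_cancel_left] at h
        rwa [← h]
    simp [hg, this]
  have hconst : ∀ x1 x2 : X, (∑ y : Y, W x1 y * g y) = ∑ y : Y, W x2 y * g y := by
    intro x1 x2
    have hb := hTbij (x2 - x1)
    calc ∑ y : Y, W x1 y * g y
        = ∑ y : Y, W x2 (T y (x2 - x1)) * g (T y (x2 - x1)) := by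
          refine Finset.sum_congr rfl fun y _ => ?_
          rw [← hTsym x1 x2 y, hgT]
      _ = ∑ y : Y, W x2 y * g y := by
          exact Fintype.sum_bijective _ hb _ _ (fun y => rfl)
  -- each single-letter sum equals the averaged form (RHS base)
  have hF : ∀ a : X, (∑ y : Y, W a y * g y)
      = ∑ y : Y, ((∑ x0 : X, W x0 y) / (Fintype.card X : ℝ)) * g y := by
    intro a
    have h1 : ∑ y : Y, ((∑ x0 : X, W x0 y) / (Fintype.card X : ℝ)) * g y
        = (∑ x0 : X, ∑ y : Y, W x0 y * g y) / (Fintype.card X : ℝ) := by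
      have hyy : ∀ y : Y, ((∑ x0 : X, W x0 y) / (Fintype.card X : ℝ)) * g y
          = (∑ x0 : X, W x0 y * g y) / (Fintype.card X : ℝ) := fun y => by
        rw [div_mul_eq_mul_div, Finset.sum_mul]
      simp_rw [hyy]
      rw [← Finset.sum_div, Finset.sum_comm]
    have h2 : (∑ x0 : X, ∑ y : Y, W x0 y * g y)
        = (Fintype.card X : ℝ) * ∑ y : Y, W a y * g y := by
      rw [Finset.sum_congr rfl (fun x0 _ => hconst x0 a), Finset.sum_const, Finset.card_univ,
        nsmul_eq_mul]
    rw [h1, h2, mul_comm, mul_div_assoc, div_self (ne_of_gt hcardX), mul_one]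
  -- now factor the LHS
  have hLHS : ∑ y : Fin L → Y, WL W L x y *
        ((((Finset.univ.filter fun x' : Fin L → X => 0 < WL W L x' y).card : ℝ) /
            (Fintype.card X : ℝ) ^ L) ^ ρ)
      = ∏ i : Fin L, ∑ y0 : Y, W (x i) y0 * g y0 := by
    rw [Finset.prod_univ_sum]
    refine Finset.sum_congr rfl fun y _ => ?_
    rw [hcard y]
    have hdiv : (∏ i, c (y i)) / (Fintype.card X : ℝ) ^ L
        = ∏ i : Fin L, (c (y i) / (Fintype.card X : ℝ)) := by
      rw [Finset.prod_div_distrib]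
      simp
    rw [hdiv, ← Real.finset_prod_rpow _ _ (fun i _ => by positivity) ρ]
    unfold WL
    rw [← Finset.prod_mul_distrib]
  rw [hLHS]
  have : ∀ i : Fin L, (∑ y0 : Y, W (x i) y0 * g y0)
      = ∑ y : Y, ((∑ x0 : X, W x0 y) / (Fintype.card X : ℝ)) * g y := fun i => hF (x i)
  rw [Finset.prod_congr rfl (fun i _ => this i), Finset.prod_const, Finset.card_univ,
    Fintype.card_fin]
end

section
/- Let 𝒴 be a finite nonempty set, w : 𝒴 → [0,1] with Σ_{y∈𝒴} w(y) = 1, and a : 𝒴 → (0,1]. Define Ẽ₀(ρ) = −log( Σ_{y∈𝒴} w(y)·a(y)^ρ ) for ρ > 0. Then the map ρ ↦ Ẽ₀(ρ)/ρ is nonincreasing on (0,∞), and sup_{ρ>0} Ẽ₀(ρ)/ρ = lim_{ρ→0+} Ẽ₀(ρ)/ρ = Σ_{y∈𝒴} w(y)·log(1/a(y)). -/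
open Finset Filter Set Topology

/-!
Writing `S(ρ) = Σ_y w(y)·a(y)^ρ`, the quantity `Ẽ₀(ρ)/ρ = -log S(ρ)^{1/ρ}` is minus the log of a
power mean of `a`, and power means increase with the exponent (Jensen for `t ↦ t^{ρ₂/ρ₁}`), which
gives monotonicity. Since `S(0) = 1`, `Ẽ₀(ρ)/ρ` is the slope of `Ẽ₀` at `0`, so its limit as
`ρ → 0⁺` is `Ẽ₀'(0) = Σ_y w(y)·log(1/a(y))`; for a nonincreasing function this limit is the supremum.
-/

theorem AntitoneOn.le_of_tendsto_nhdsGT {f : ℝ → ℝ} {x₀ L : ℝ} (hf : AntitoneOn f (Ioi x₀))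
    (hL : Tendsto f (𝓝[>] x₀) (𝓝 L)) {x : ℝ} (hx : x₀ < x) : f x ≤ L :=
  ge_of_tendsto hL <| by
    filter_upwards [Ioc_mem_nhdsGT hx] with t ht
    exact hf ht.1 hx ht.2

theorem AntitoneOn.iSup_eq_of_tendsto_nhdsGT {f : ℝ → ℝ} {x₀ L : ℝ} (hf : AntitoneOn f (Ioi x₀))
    (hL : Tendsto f (𝓝[>] x₀) (𝓝 L)) : ⨆ x : {x : ℝ // x₀ < x}, f x = L := by
  have hle : ∀ x : {x : ℝ // x₀ < x}, f x ≤ L := fun x => hf.le_of_tendsto_nhdsGT hL x.2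
  have : Nonempty {x : ℝ // x₀ < x} := ⟨⟨x₀ + 1, by linarith⟩⟩
  refine le_antisymm (ciSup_le hle) (le_of_tendsto hL ?_)
  filter_upwards [self_mem_nhdsWithin] with x hx
  exact le_ciSup ⟨L, forall_mem_range.2 hle⟩ (⟨x, hx⟩ : {x : ℝ // x₀ < x})

section Etilde0

variable {Y : Type*} [Fintype Y] {w a : Y → ℝ}

noncomputable def Etilde0 (w a : Y → ℝ) (ρ : ℝ) : ℝ := -Real.log (∑ y, w y * a y ^ ρ)

theorem sum_mul_rpow_pos (hw0 : ∀ y, 0 ≤ w y) (hwsum : ∑ y, w y = 1) (ha0 : ∀ y, 0 < a y)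
    (ρ : ℝ) : 0 < ∑ y, w y * a y ^ ρ := by
  obtain ⟨y₀, -, hy₀⟩ : ∃ y ∈ Finset.univ, w y ≠ 0 :=
    exists_ne_zero_of_sum_ne_zero (by rw [hwsum]; exact one_ne_zero)
  exact sum_pos' (fun y _ => mul_nonneg (hw0 y) (Real.rpow_nonneg (ha0 y).le _))
    ⟨y₀, mem_univ _, mul_pos ((hw0 y₀).lt_of_ne' hy₀) (Real.rpow_pos_of_pos (ha0 y₀) _)⟩

theorem sum_mul_rpow_rpow_le (hw0 : ∀ y, 0 ≤ w y) (hwsum : ∑ y, w y = 1) (ha0 : ∀ y, 0 < a y)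
    {ρ₁ ρ₂ : ℝ} (h₁ : 0 < ρ₁) (h₁₂ : ρ₁ ≤ ρ₂) :
    (∑ y, w y * a y ^ ρ₁) ^ (ρ₂ / ρ₁) ≤ ∑ y, w y * a y ^ ρ₂ := by
  have hpow : ∀ y, (a y ^ ρ₁) ^ (ρ₂ / ρ₁) = a y ^ ρ₂ := fun y => by
    rw [← Real.rpow_mul (ha0 y).le, mul_div_cancel₀ _ h₁.ne']
  calc (∑ y, w y * a y ^ ρ₁) ^ (ρ₂ / ρ₁) ≤ ∑ y, w y * (a y ^ ρ₁) ^ (ρ₂ / ρ₁) :=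
        Real.rpow_arith_mean_le_arith_mean_rpow univ w (fun y => a y ^ ρ₁) (fun y _ => hw0 y)
          hwsum (fun y _ => (Real.rpow_pos_of_pos (ha0 y) _).le) ((one_le_div h₁).2 h₁₂)
    _ = ∑ y, w y * a y ^ ρ₂ := by simp_rw [hpow]

theorem antitoneOn_Etilde0_div (hw0 : ∀ y, 0 ≤ w y) (hwsum : ∑ y, w y = 1)
    (ha0 : ∀ y, 0 < a y) : AntitoneOn (fun ρ => Etilde0 w a ρ / ρ) (Ioi 0) := by
  intro ρ₁ (h₁ : 0 < ρ₁) ρ₂ (h₂ : 0 < ρ₂) h₁₂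
  have hlog : ρ₂ / ρ₁ * Real.log (∑ y, w y * a y ^ ρ₁) ≤ Real.log (∑ y, w y * a y ^ ρ₂) := by
    have hS := sum_mul_rpow_pos hw0 hwsum ha0 ρ₁
    rw [← Real.log_rpow hS]
    exact Real.log_le_log (Real.rpow_pos_of_pos hS _) (sum_mul_rpow_rpow_le hw0 hwsum ha0 h₁ h₁₂)
  rw [div_mul_eq_mul_div, div_le_iff₀ h₁] at hlog
  simp only [Etilde0]
  rw [div_le_div_iff₀ h₂ h₁]
  linarith

theorem Etilde0_zero (hwsum : ∑ y, w y = 1) : Etilde0 w a 0 = 0 := by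
  simp [Etilde0, hwsum]

theorem hasDerivAt_Etilde0_zero (hwsum : ∑ y, w y = 1) (ha0 : ∀ y, 0 < a y) :
    HasDerivAt (Etilde0 w a) (∑ y, w y * Real.log (1 / a y)) 0 := by
  have hS0 : ∑ y, w y * a y ^ (0 : ℝ) = 1 := by simpa using hwsum
  have hS : HasDerivAt (fun ρ : ℝ => ∑ y, w y * a y ^ ρ) (∑ y, w y * Real.log (a y)) 0 := by
    refine HasDerivAt.fun_sum fun y _ => ?_
    simpa using ((Real.hasStrictDerivAt_const_rpow (ha0 y) 0).hasDerivAt).const_mul (w y)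
  have h := (hS.log (by rw [hS0]; exact one_ne_zero)).fun_neg
  rw [hS0, div_one, ← sum_neg_distrib] at h
  simp only [one_div, Real.log_inv, mul_neg]
  exact h

theorem tendsto_Etilde0_div_nhdsGT_zero (hwsum : ∑ y, w y = 1) (ha0 : ∀ y, 0 < a y) :
    Tendsto (fun ρ => Etilde0 w a ρ / ρ) (𝓝[>] 0) (𝓝 (∑ y, w y * Real.log (1 / a y))) := by
  have hslope : (fun ρ => Etilde0 w a ρ / ρ) = slope (Etilde0 w a) 0 := by
    funext ρ
    simp [slope_def_field, Etilde0_zero hwsum]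
  rw [hslope]
  exact (hasDerivAt_iff_tendsto_slope.mp (hasDerivAt_Etilde0_zero hwsum ha0)).mono_left
    (nhdsWithin_mono _ fun _ hx => ne_of_gt hx)

end Etilde0

theorem Etilde0_div_rho_antitone_sup_lim_general
    {Y : Type*} [Fintype Y]
    (w : Y → ℝ) (hw0 : ∀ y, 0 ≤ w y) (hwsum : ∑ y, w y = 1)
    (a : Y → ℝ) (ha0 : ∀ y, 0 < a y) :
    (∀ ρ₁ ρ₂ : ℝ, 0 < ρ₁ → ρ₁ ≤ ρ₂ →
        (-Real.log (∑ y, w y * a y ^ ρ₂)) / ρ₂ ≤ (-Real.log (∑ y, w y * a y ^ ρ₁)) / ρ₁) ∧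
    Filter.Tendsto (fun ρ : ℝ => (-Real.log (∑ y, w y * a y ^ ρ)) / ρ)
      (nhdsWithin 0 (Set.Ioi 0)) (nhds (∑ y, w y * Real.log (1 / a y))) ∧
    (⨆ ρ : {ρ : ℝ // 0 < ρ}, (-Real.log (∑ y, w y * a y ^ ρ.1)) / ρ.1)
      = ∑ y, w y * Real.log (1 / a y) := by
  have hanti := antitoneOn_Etilde0_div hw0 hwsum ha0
  have hlim := tendsto_Etilde0_div_nhdsGT_zero hwsum ha0
  exact ⟨fun ρ₁ ρ₂ h₁ h₁₂ => hanti h₁ (lt_of_lt_of_le h₁ h₁₂) h₁₂, hlim,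
    hanti.iSup_eq_of_tendsto_nhdsGT hlim⟩

/-- Let `w : 𝒴 → [0,1]` sum to `1` and `a : 𝒴 → (0,1]`, and set
`Ẽ₀(ρ) = −log(Σ_y w(y)·a(y)^ρ)`. Then `ρ ↦ Ẽ₀(ρ)/ρ` is nonincreasing on `(0,∞)`, and
`sup_{ρ>0} Ẽ₀(ρ)/ρ = lim_{ρ→0⁺} Ẽ₀(ρ)/ρ = Σ_y w(y)·log(1/a(y))`. -/
theorem Etilde0_div_rho_antitone_sup_lim
    {Y : Type*} [Fintype Y] [Nonempty Y]
    (w : Y → ℝ) (hw0 : ∀ y, 0 ≤ w y) (hw1 : ∀ y, w y ≤ 1) (hwsum : ∑ y, w y = 1)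
    (a : Y → ℝ) (ha0 : ∀ y, 0 < a y) (ha1 : ∀ y, a y ≤ 1) :
    (∀ ρ₁ ρ₂ : ℝ, 0 < ρ₁ → ρ₁ ≤ ρ₂ →
        (-Real.log (∑ y, w y * a y ^ ρ₂)) / ρ₂ ≤ (-Real.log (∑ y, w y * a y ^ ρ₁)) / ρ₁) ∧
    Filter.Tendsto (fun ρ : ℝ => (-Real.log (∑ y, w y * a y ^ ρ)) / ρ)
      (nhdsWithin 0 (Set.Ioi 0)) (nhds (∑ y, w y * Real.log (1 / a y))) ∧
    (⨆ ρ : {ρ : ℝ // 0 < ρ}, (-Real.log (∑ y, w y * a y ^ ρ.1)) / ρ.1)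
      = ∑ y, w y * Real.log (1 / a y) :=
  Etilde0_div_rho_antitone_sup_lim_general w hw0 hwsum a ha0
end

section
/- For every real t ≥ 1 and every real s ≥ 0, Γ(t)/Γ(t+s) ≤ 2 · √(1 + s/t) · (t/(t+s))^t · e^s · (t+s)^{−s}, where Γ is the Euler Gamma function. -/
/-!
With the Stirling remainder `g x = log Γ(x) - (x - 1/2) log x + x`, the inequality says
`g t - g (t + s) ≤ log 2`. Write `s = r + n` with `n = ⌊s⌋` and `0 ≤ r < 1`.

For the integer part, `log Γ(x + n) - log Γ(x) = ∑ log (x + k)` dominates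
`∫_{x-1/2}^{x+n-1/2} log` because each `log (x + k)` is at least the mean of the concave `log`
over `[x + k - 1/2, x + k + 1/2]` (Hermite–Hadamard); with `log y ≤ y - 1` this gives
`g (x + n) ≥ g x - 1/(4x)`. For the fractional part, log-convexity of `Γ` on `[t + r, t + r + 1]`
bounds `Γ(t + 1) = t Γ(t)` and gives `g (t + r) ≥ g t - r/(2t)`. Finally
`r/(2t) + 1/(4(t + r)) ≤ 5/8 < log 2`.
-/

open Real

lemma log_sub_log_le_div {a b : ℝ} (ha : 0 < a) (hb : 0 < b) :
    log b - log a ≤ (b - a) / a := by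
  rw [← log_div hb.ne' ha.ne', sub_div, div_self ha.ne']
  exact log_le_sub_one_of_pos (div_pos hb ha)

lemma integral_log_le_mul_log_midpoint {a b : ℝ} (ha : 0 < a) (hab : a ≤ b) :
    ∫ x in a..b, log x ≤ (b - a) * log ((a + b) / 2) := by
  have hm : 0 < (a + b) / 2 := by linarith
  set m := (a + b) / 2
  have htangent : ∀ x ∈ Set.Icc a b, log x ≤ log m + (x - m) / m := fun x hx => by
    linarith [log_sub_log_le_div hm (ha.trans_le hx.1)]
  calc ∫ x in a..b, log x ≤ ∫ x in a..b, (log m + (x - m) / m) :=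
        intervalIntegral.integral_mono_on hab intervalIntegral.intervalIntegrable_log'
          (by apply Continuous.intervalIntegrable; fun_prop) htangent
    _ = (b - a) * log m := by
        rw [intervalIntegral.integral_add intervalIntegrable_const
          (by apply Continuous.intervalIntegrable; fun_prop), intervalIntegral.integral_div,
          intervalIntegral.integral_sub intervalIntegral.intervalIntegrable_id
          intervalIntegrable_const, integral_id, intervalIntegral.integral_const,
          intervalIntegral.integral_const, smul_eq_mul, smul_eq_mul]
        field_simp
        ring

lemma integral_log_le_log_Gamma_add_nat_sub {x : ℝ} (hx : 1 / 2 < x) (n : ℕ) :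
    ∫ y in x - 1 / 2..x + n - 1 / 2, log y ≤ log (Gamma (x + n)) - log (Gamma x) := by
  induction n with
  | zero => simp
  | succ n ih =>
    have hxn : 0 < x + n := by positivity
    have hstep : ∫ y in x + n - 1 / 2..x + n + 1 / 2, log y ≤ log (x + n) := by
      convert integral_log_le_mul_log_midpoint (a := x + n - 1 / 2) (b := x + n + 1 / 2)
        (by linarith) (by linarith) using 1
      ring_nf
    rw [← intervalIntegral.integral_add_adjacent_intervals (b := x + n - 1 / 2)
      intervalIntegral.intervalIntegrable_log' intervalIntegral.intervalIntegrable_log']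
    push_cast
    rw [← add_assoc, Gamma_add_one hxn.ne', log_mul hxn.ne' (Gamma_pos_of_pos hxn).ne',
      show x + n + 1 - 1 / 2 = x + n + 1 / 2 by ring]
    linarith

noncomputable def stirlingRemainder (x : ℝ) : ℝ :=
  log (Gamma x) - (x - 1 / 2) * log x + x

lemma stirlingRemainder_sub_le_add_nat {x : ℝ} (hx : 1 / 2 < x) (n : ℕ) :
    stirlingRemainder x - 1 / (4 * x) ≤ stirlingRemainder (x + n) := by
  have hn : (0 : ℝ) ≤ n := n.cast_nonneg
  have hsum := integral_log_le_log_Gamma_add_nat_sub hx n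
  rw [integral_log] at hsum
  have hfar := log_sub_log_le_div (a := x + n - 1 / 2) (b := x + n) (by linarith) (by linarith)
  have hnear := log_sub_log_le_div (a := x) (b := x - 1 / 2) (by linarith) (by linarith)
  have e1 : (x + n - 1 / 2) * ((x + n - (x + n - 1 / 2)) / (x + n - 1 / 2)) = 1 / 2 := by
    rw [mul_div_cancel₀ _ (by linarith)]; ring
  have e2 : (x - 1 / 2) * ((x - 1 / 2 - x) / x) = -(1 / 2) + 1 / (4 * x) := by
    field_simp; ring
  have h1 := mul_le_mul_of_nonneg_left hfar (by linarith : 0 ≤ x + n - 1 / 2)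
  have h2 := mul_le_mul_of_nonneg_left hnear (by linarith : 0 ≤ x - 1 / 2)
  unfold stirlingRemainder
  linarith

lemma log_Gamma_add_one_le {t r : ℝ} (ht : 0 < t) (hr0 : 0 ≤ r) (hr1 : r ≤ 1) :
    log (Gamma (t + 1)) ≤ log (Gamma (t + r)) + (1 - r) * log (t + r) := by
  have htr : 0 < t + r := by linarith
  have hconv := convexOn_log_Gamma.2 (x := t + r) (y := t + r + 1) htr
    (by linarith : 0 < t + r + 1)
    hr0 (by linarith : 0 ≤ 1 - r) (by ring)
  simp only [Function.comp_apply, smul_eq_mul] at hconv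
  rw [Gamma_add_one htr.ne', log_mul htr.ne' (Gamma_pos_of_pos htr).ne',
    show r * (t + r) + (1 - r) * (t + r + 1) = t + 1 by ring] at hconv
  linarith

lemma stirlingRemainder_sub_le_add {t r : ℝ} (ht : 0 < t) (hr0 : 0 ≤ r) (hr1 : r ≤ 1) :
    stirlingRemainder t - r / (2 * t) ≤ stirlingRemainder (t + r) := by
  have hconv := log_Gamma_add_one_le ht hr0 hr1
  rw [Gamma_add_one ht.ne', log_mul ht.ne' (Gamma_pos_of_pos ht).ne'] at hconv
  have hlog := mul_le_mul_of_nonneg_left (log_sub_log_le_div ht (by linarith : 0 < t + r))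
    (by linarith : 0 ≤ t + 1 / 2)
  have e : (t + 1 / 2) * ((t + r - t) / t) = r + r / (2 * t) := by field_simp; ring
  unfold stirlingRemainder
  linarith

lemma div_two_mul_add_one_div_four_mul_add_le_log_two {t r : ℝ} (ht : 1 ≤ t) (hr0 : 0 ≤ r)
    (hr1 : r ≤ 1) : r / (2 * t) + 1 / (4 * (t + r)) ≤ log 2 := by
  have hfirst : r / (2 * t) ≤ r / 2 := by
    rw [div_le_div_iff₀ (by linarith) two_pos]
    nlinarith
  have hsecond : 1 / (4 * (t + r)) ≤ (1 - r / 2) / 4 := by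
    rw [div_le_div_iff₀ (by linarith) (by norm_num)]
    nlinarith
  linarith [log_two_gt_d9]

lemma stirlingRemainder_sub_log_two_le {t s : ℝ} (ht : 1 ≤ t) (hs : 0 ≤ s) :
    stirlingRemainder t - log 2 ≤ stirlingRemainder (t + s) := by
  set n := ⌊s⌋₊
  have hr0 : 0 ≤ s - n := sub_nonneg.mpr (Nat.floor_le hs)
  have hr1 : s - n ≤ 1 := by linarith [Nat.lt_floor_add_one s]
  have hfrac := stirlingRemainder_sub_le_add (by linarith : 0 < t) hr0 hr1
  have hint := stirlingRemainder_sub_le_add_nat (x := t + (s - n)) (by linarith) n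
  rw [show t + (s - n) + n = t + s by ring] at hint
  linarith [div_two_mul_add_one_div_four_mul_add_le_log_two ht hr0 hr1]

lemma two_mul_sqrt_mul_rpow_mul_exp_mul_rpow_eq {t s : ℝ} (ht : 0 < t) (hts : 0 < t + s) :
    2 * √(1 + s / t) * (t / (t + s)) ^ t * exp s * (t + s) ^ (-s)
      = exp (log 2 + s - (t + s - 1 / 2) * log (t + s) + (t - 1 / 2) * log t) := by
  rw [show 1 + s / t = (t + s) / t by field_simp]
  have hsqrt : 0 < √((t + s) / t) := sqrt_pos.2 (div_pos hts ht)
  have hpow : 0 < (t / (t + s)) ^ t := rpow_pos_of_pos (div_pos ht hts) t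
  have hpow' : 0 < (t + s) ^ (-s) := rpow_pos_of_pos hts (-s)
  rw [← exp_log
    (by positivity : 0 < 2 * √((t + s) / t) * (t / (t + s)) ^ t * exp s * (t + s) ^ (-s))]
  congr 1
  rw [log_mul (by positivity) hpow'.ne', log_mul (by positivity) (exp_pos s).ne',
    log_mul (by positivity) hpow.ne', log_mul two_ne_zero hsqrt.ne',
    log_sqrt (div_pos hts ht).le, log_exp, log_rpow (div_pos ht hts), log_rpow hts,
    log_div hts.ne' ht.ne', log_div ht.ne' hts.ne']
  ring

/-- For every real `t ≥ 1` and `s ≥ 0`,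
`Γ(t)/Γ(t+s) ≤ 2·√(1 + s/t)·(t/(t+s))^t·e^s·(t+s)^{−s}`,
where `Γ` is the Euler Gamma function and powers with real exponents are `exp(b·log a)`. -/
theorem Gamma_ratio_upper_bound
    (t s : ℝ) (ht : 1 ≤ t) (hs : 0 ≤ s) :
    Real.Gamma t / Real.Gamma (t + s)
      ≤ 2 * Real.sqrt (1 + s / t) * (t / (t + s)) ^ t * Real.exp s * (t + s) ^ (-s) := by
  have ht0 : 0 < t := by linarith
  have hts : 0 < t + s := by linarith
  have hremainder := stirlingRemainder_sub_log_two_le ht hs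
  unfold stirlingRemainder at hremainder
  rw [two_mul_sqrt_mul_rpow_mul_exp_mul_rpow_eq ht0 hts, ← exp_log (Gamma_pos_of_pos ht0),
    ← exp_log (Gamma_pos_of_pos hts), ← exp_sub, exp_le_exp]
  linarith
end

section
/- Let T, N, M be positive integers with M ≥ 2T, set ξ = N/M and ω = e·√(3/(7π)), and let s be a real number with 0 ≤ s ≤ N. Then (ω√(2π))^T · (M/(M−T))^s · (Γ(T)/Γ(T+s)) · s^s · e^{−s} · ((s+T)/T)^{T/2} ≤ 2·√(1+N) · e^{(1+2ξ)T} · (T/(T+s))^{T/2}, where by convention s^s = 1 when s = 0. -/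
/-!
Stirling's bounds `√π · y^y e^{-y} ≤ √y · Γ(y)` (real `y ≥ 1`) and `Γ(T) √T ≤ e · T^T e^{-T}`
make `Γ(T)/Γ(T+s)` cancel against `s^s e^{-s} ((s+T)/T)^T` up to the factor `(s/(T+s))^s ≤ 1`,
which leaves `e/√π · √(1 + s/T) ≤ 2√(1+N)`. The other factors are controlled by
`ω√(2π) = e√(6/7) ≤ e` and `log (M/(M-T)) ≤ T/(M-T) ≤ 2T/M`.
-/

open Real Nat

lemma pow_mul_exp_neg_le (n : ℕ) {x : ℝ} (hx : 0 ≤ x) :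
    x ^ n * exp (-x) ≤ n ^ n * exp (-n) := by
  rcases Nat.eq_zero_or_pos n with rfl | hn
  · simpa using hx
  have hn' : (0 : ℝ) < n := by exact_mod_cast hn
  have hratio : x / n ≤ exp (x / n - 1) := by linarith [add_one_le_exp (x / n - 1)]
  calc x ^ n * exp (-x) = n ^ n * (x / n) ^ n * exp (-x) := by
        rw [div_pow, mul_div_cancel₀ _ (by positivity)]
    _ ≤ n ^ n * exp (x / n - 1) ^ n * exp (-x) := by gcongr
    _ = n ^ n * exp (-n) := by
        rw [← exp_nat_mul, mul_assoc, ← exp_add]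
        field_simp
        ring_nf

/-- The Stirling sequence `n! / (√(2n) (n/e)^n)` decreases from its value `e/√2` at `n = 1`. -/
lemma factorial_le_exp_one_mul_sqrt_mul {n : ℕ} (hn : n ≠ 0) :
    (n ! : ℝ) ≤ exp 1 * √n * (n / exp 1) ^ n := by
  obtain ⟨m, rfl⟩ := Nat.exists_eq_succ_of_ne_zero hn
  have h := Stirling.stirlingSeq'_antitone (Nat.zero_le m)
  simp only [Function.comp, Nat.succ_eq_add_one, zero_add, Stirling.stirlingSeq_one] at h
  rw [Stirling.stirlingSeq, div_le_iff₀ (by positivity)] at h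
  calc ((m + 1) ! : ℝ)
      ≤ exp 1 / √2 * (√(2 * (m + 1 : ℕ)) * ((m + 1 : ℕ) / exp 1) ^ (m + 1)) := h
    _ = _ := by
        rw [sqrt_mul zero_le_two]
        field_simp

lemma Gamma_nat_mul_sqrt_le {n : ℕ} (hn : n ≠ 0) :
    Gamma n * √n ≤ exp 1 * (n ^ (n : ℝ) * exp (-n)) := by
  have hpos : (0 : ℝ) < n := by positivity
  have h := factorial_le_exp_one_mul_sqrt_mul hn
  rw [← Gamma_nat_eq_factorial, Gamma_add_one hpos.ne', div_pow, exp_one_pow,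
    ← rpow_natCast] at h
  rw [exp_neg, ← div_eq_mul_inv]
  refine le_of_mul_le_mul_left ?_ (sqrt_pos.2 hpos)
  calc √n * (Gamma n * √n) = n * Gamma n := by
        rw [mul_comm, mul_assoc, mul_self_sqrt hpos.le, mul_comm]
    _ ≤ _ := h.trans_eq (by ring)

/-- Log-convexity of `Γ` on the segment `[y, y + 1]`, which contains `n + 1`. -/
lemma factorial_le_Gamma_mul_rpow {n : ℕ} {y : ℝ} (hny : n ≤ y) (hyn : y ≤ n + 1) (hy : 0 < y) :
    (n ! : ℝ) ≤ Gamma y * y ^ (n + 1 - y) := by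
  have hconv := convexOn_log_Gamma.2 (Set.mem_Ioi.2 hy) (Set.mem_Ioi.2 (by linarith : 0 < y + 1))
    (by linarith : 0 ≤ y - n) (by linarith : 0 ≤ n + 1 - y) (by ring)
  have hpt : (y - n) * y + (n + 1 - y) * (y + 1) = (n : ℝ) + 1 := by ring
  simp only [Function.comp, smul_eq_mul, hpt, Gamma_nat_eq_factorial, Gamma_add_one hy.ne',
    log_mul hy.ne' (Gamma_pos_of_pos hy).ne'] at hconv
  rw [← exp_log (by positivity : (0 : ℝ) < n !), rpow_def_of_pos hy,
    ← exp_log (Gamma_pos_of_pos hy), ← exp_add, exp_le_exp]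
  linarith

lemma sqrt_pi_mul_rpow_mul_exp_neg_le {y : ℝ} (hy : 1 ≤ y) :
    √π * (y ^ y * exp (-y)) ≤ √y * Gamma y := by
  set n := ⌊y⌋₊
  have hy0 : 0 < y := by linarith
  have hny : (n : ℝ) ≤ y := Nat.floor_le hy0.le
  have hyn : y < n + 1 := Nat.lt_floor_add_one y
  have hn : (1 : ℝ) ≤ n := by exact_mod_cast Nat.le_floor (by exact_mod_cast hy)
  have hsqrt : √π * √y ≤ √(2 * π * n) := by
    rw [← sqrt_mul pi_pos.le]
    exact sqrt_le_sqrt (by nlinarith [pi_pos])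
  have hsplit : y ^ y = y ^ n * y ^ (y - n) := by
    rw [← rpow_natCast, ← rpow_add hy0, add_sub_cancel]
  have hpow : (n : ℝ) ^ n * exp (-n) = (n / exp 1) ^ n := by
    rw [div_pow, exp_one_pow, exp_neg, div_eq_mul_inv]
  have hsy : 0 < √y := sqrt_pos.2 hy0
  calc √π * (y ^ y * exp (-y)) = √π * (y ^ n * exp (-y)) * y ^ (y - n) := by rw [hsplit]; ring
    _ ≤ √π * (n ^ n * exp (-n)) * y ^ (y - n) := by
        gcongr √π * ?_ * _; exact pow_mul_exp_neg_le n hy0.le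
    _ = (√π * √y) * (n / exp 1) ^ n * y ^ (y - n) / √y := by rw [hpow]; field_simp
    _ ≤ √(2 * π * n) * (n / exp 1) ^ n * y ^ (y - n) / √y := by gcongr
    _ ≤ n ! * y ^ (y - n) / √y := by gcongr; exact Stirling.le_factorial_stirling n
    _ ≤ Gamma y * y ^ (n + 1 - y) * y ^ (y - n) / √y := by
        gcongr; exact factorial_le_Gamma_mul_rpow hny hyn.le hy0
    _ = √y * Gamma y := by
        rw [mul_assoc, ← rpow_add hy0, show (n : ℝ) + 1 - y + (y - n) = 1 by ring, rpow_one,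
          mul_div_assoc, div_sqrt, mul_comm]

lemma Gamma_div_Gamma_add_mul_le {T : ℕ} (hT : T ≠ 0) {s : ℝ} (hs : 0 ≤ s) :
    Gamma T / Gamma (T + s) * s ^ s * exp (-s) * ((s + T) / T) ^ (T : ℝ)
      ≤ exp 1 / √π * √((T + s) / T) := by
  have hT1 : (1 : ℝ) ≤ T := by exact_mod_cast Nat.one_le_iff_ne_zero.2 hT
  set y : ℝ := T + s with hy
  have hy0 : 0 < y := by linarith
  have hsy : s ^ s ≤ y ^ s := rpow_le_rpow hs (by linarith) hs
  have hsplit : y ^ y = y ^ s * y ^ (T : ℝ) := by rw [← rpow_add hy0, hy, add_comm]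
  have hexp : exp (-y) = exp (-T) * exp (-s) := by rw [← exp_add, hy, neg_add]
  calc Gamma T / Gamma y * s ^ s * exp (-s) * ((s + T) / T) ^ (T : ℝ)
      = (Gamma T * √T) * s ^ s * exp (-s) * y ^ (T : ℝ) / (Gamma y * √T * T ^ (T : ℝ)) := by
        rw [add_comm s, div_rpow hy0.le (by linarith)]
        field_simp
    _ ≤ (exp 1 * (T ^ (T : ℝ) * exp (-T))) * y ^ s * exp (-s) * y ^ (T : ℝ)
          / (Gamma y * √T * T ^ (T : ℝ)) := by
        gcongr ?_ * ?_ * _ * _ / _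
        exact Gamma_nat_mul_sqrt_le hT
    _ = exp 1 * (y ^ y * exp (-y)) / (Gamma y * √T) := by
        rw [hsplit, hexp]
        field_simp
    _ ≤ exp 1 * (√y * Gamma y / √π) / (Gamma y * √T) := by
        gcongr
        rw [le_div_iff₀' (by positivity)]
        exact sqrt_pi_mul_rpow_mul_exp_neg_le (by linarith)
    _ = exp 1 / √π * √(y / T) := by
        rw [sqrt_div hy0.le]
        field_simp

lemma Gamma_div_Gamma_add_mul_le_two_mul_sqrt {T : ℕ} (hT : T ≠ 0) {s : ℝ} (hs : 0 ≤ s) :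
    Gamma T / Gamma (T + s) * s ^ s * exp (-s) * ((s + T) / T) ^ (T : ℝ) ≤ 2 * √(1 + s) := by
  have hT1 : (1 : ℝ) ≤ T := by exact_mod_cast Nat.one_le_iff_ne_zero.2 hT
  have hconst : exp 1 / √π ≤ 2 := by
    have hpi : 1.7 ≤ √π := le_sqrt_of_sq_le (by nlinarith [pi_gt_three])
    rw [div_le_iff₀ (by positivity)]
    nlinarith [exp_one_lt_d9]
  have hratio : (T + s) / T ≤ 1 + s := by
    rw [div_le_iff₀ (by positivity)]
    nlinarith
  calc _ ≤ exp 1 / √π * √((T + s) / T) := Gamma_div_Gamma_add_mul_le hT hs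
    _ ≤ 2 * √(1 + s) := by gcongr

lemma div_sub_rpow_le_exp {a b s : ℝ} (hb : 0 < b) (hab : 2 * b ≤ a) (hs : 0 ≤ s) :
    (a / (a - b)) ^ s ≤ exp (2 * b / a * s) := by
  have hab' : 0 < a - b := by linarith
  have hratio : a / (a - b) ≤ exp (2 * b / a) := calc
    a / (a - b) = b / (a - b) + 1 := by field_simp; ring
    _ ≤ exp (b / (a - b)) := add_one_le_exp _
    _ ≤ exp (2 * b / a) := by
        rw [exp_le_exp, div_le_div_iff₀ hab' (by linarith)]
        nlinarith
  rw [exp_mul]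
  exact rpow_le_rpow (div_nonneg (by linarith) hab'.le) hratio hs

theorem A_le_B_bound_general
    (T N M : ℕ) (hT : 0 < T) (hMT : 2 * T ≤ M)
    (s : ℝ) (hs0 : 0 ≤ s) (hsN : s ≤ (N : ℝ)) :
    (Real.exp 1 * Real.sqrt (3 / (7 * Real.pi)) * Real.sqrt (2 * Real.pi)) ^ (T : ℝ) *
        ((M : ℝ) / ((M : ℝ) - (T : ℝ))) ^ s *
        (Real.Gamma (T : ℝ) / Real.Gamma ((T : ℝ) + s)) *
        s ^ s * Real.exp (-s) *
        ((s + (T : ℝ)) / (T : ℝ)) ^ ((T : ℝ) / 2)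
      ≤ 2 * Real.sqrt (1 + (N : ℝ)) *
          Real.exp ((1 + 2 * ((N : ℝ) / (M : ℝ))) * (T : ℝ)) *
          ((T : ℝ) / ((T : ℝ) + s)) ^ ((T : ℝ) / 2) := by
  have hTpos : (0 : ℝ) < T := by exact_mod_cast hT
  have hMT' : 2 * (T : ℝ) ≤ M := by exact_mod_cast hMT
  have hbase : exp 1 * √(3 / (7 * π)) * √(2 * π) ≤ exp 1 := by
    rw [mul_assoc, ← sqrt_mul (by positivity),
      show 3 / (7 * π) * (2 * π) = 6 / 7 by field_simp; ring]
    exact mul_le_of_le_one_right (exp_pos 1).le (sqrt_le_one.2 (by norm_num))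
  have hdilation : ((M : ℝ) / (M - T)) ^ s ≤ exp (2 * (N / M) * T) := by
    refine (div_sub_rpow_le_exp hTpos hMT' hs0).trans (exp_le_exp.2 ?_)
    rw [show 2 * ((N : ℝ) / M) * T = 2 * T / M * N by ring]
    gcongr
  have hcore : Gamma T / Gamma (T + s) * s ^ s * exp (-s) * ((s + T) / T) ^ (T : ℝ)
      ≤ 2 * √(1 + N) :=
    (Gamma_div_Gamma_add_mul_le_two_mul_sqrt hT.ne' hs0).trans (by gcongr)
  set Q := ((s + T) / T : ℝ) ^ ((T : ℝ) / 2)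
  have hQ : 0 < Q := by positivity
  have hQQ : Q * Q = ((s + T) / T : ℝ) ^ (T : ℝ) := by rw [← rpow_add (by positivity), add_halves]
  have hQinv : ((T : ℝ) / (T + s)) ^ ((T : ℝ) / 2) = Q⁻¹ := by
    rw [← inv_rpow (by positivity), inv_div, add_comm]
  rw [hQinv, ← div_eq_mul_inv, le_div_iff₀ hQ]
  have hss : 0 ≤ s ^ s := rpow_nonneg hs0 s
  have hdilation_nonneg : 0 ≤ ((M : ℝ) / (M - T)) ^ s := rpow_nonneg (div_nonneg M.cast_nonneg (by linarith : (0 : ℝ) ≤ M - T)) s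
  calc _ = (exp 1 * √(3 / (7 * π)) * √(2 * π)) ^ (T : ℝ) * ((M : ℝ) / (M - T)) ^ s *
        (Gamma T / Gamma (T + s) * s ^ s * exp (-s) * (Q * Q)) := by ring
    _ ≤ exp 1 ^ (T : ℝ) * exp (2 * (N / M) * T) * (2 * √(1 + N)) := by rw [hQQ]; gcongr
    _ = 2 * √(1 + N) * exp ((1 + 2 * (N / M)) * T) := by rw [← exp_mul, ← exp_add]; ring_nf

/-- For positive integers `T, N, M` with `M ≥ 2T`, `ξ = N/M`, `ω = e·√(3/(7π))`, and any
real `0 ≤ s ≤ N`, it holds that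
`(ω√(2π))^T · (M/(M−T))^s · (Γ(T)/Γ(T+s)) · s^s · e^{−s} · ((s+T)/T)^{T/2}`
`≤ 2·√(1+N) · e^{(1+2ξ)T} · (T/(T+s))^{T/2}`,
with the convention `s^s = 1` when `s = 0` (which is `Real.rpow`'s convention). -/
theorem A_le_B_bound
    (T N M : ℕ) (hT : 0 < T) (hN : 0 < N) (hM : 0 < M) (hMT : 2 * T ≤ M)
    (s : ℝ) (hs0 : 0 ≤ s) (hsN : s ≤ (N : ℝ)) :
    (Real.exp 1 * Real.sqrt (3 / (7 * Real.pi)) * Real.sqrt (2 * Real.pi)) ^ (T : ℝ) *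
        ((M : ℝ) / ((M : ℝ) - (T : ℝ))) ^ s *
        (Real.Gamma (T : ℝ) / Real.Gamma ((T : ℝ) + s)) *
        s ^ s * Real.exp (-s) *
        ((s + (T : ℝ)) / (T : ℝ)) ^ ((T : ℝ) / 2)
      ≤ 2 * Real.sqrt (1 + (N : ℝ)) *
          Real.exp ((1 + 2 * ((N : ℝ) / (M : ℝ))) * (T : ℝ)) *
          ((T : ℝ) / ((T : ℝ) + s)) ^ ((T : ℝ) / 2) :=
  A_le_B_bound_general T N M hT hMT s hs0 hsN
end
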